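/- Let n be a positive even integer that is not expressible as a sum of one or two powers of 2 (i.e., n is not of the form 2^{m} or 2^{m₁} + 2^{m₂}). Then log₂(n) + 1 ≤ ‖n‖₂, where log₂ denotes the real base-2 logarithm. -/

import Mathlib

/-!
Every number built from `m` twos with `+` and `*` is even and at most `2 ^ m`. Induction on the
expression shows more: unless `n` is a sum of two powers of two, there is a factor `2` to spare,
`2 * n ≤ 2 ^ m`. A sum `a + b` loses nothing only when `a` and `b` are powers of two, and a
product `a * b` only when both factors are sums of two powers of two and either one of them is a
power of two or both are of the form `3 * 2 ^ j`; in all these cases `a + b`, resp. `a * b`, is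
again a sum of two powers of two. Taking logarithms of `2 * n ≤ 2 ^ ‖n‖₂` gives the theorem.
-/

/-- `CanRepr l n m` means `n` can be expressed using exactly `m` copies of `l`
    combined with addition and multiplication (and parentheses). -/
inductive CanRepr (l : ℕ) : ℕ → ℕ → Prop
  | base : CanRepr l l 1
  | add {a b p q : ℕ} : CanRepr l a p → CanRepr l b q → CanRepr l (a + b) (p + q)
  | mul {a b p q : ℕ} : CanRepr l a p → CanRepr l b q → CanRepr l (a * b) (p + q)

/-- The `l`-complexity `‖n‖_l`: the minimal number of `l`'s needed to express `n`
    using only addition and multiplication. (By convention `sInf ∅ = 0`.) -/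
noncomputable def complexity (l n : ℕ) : ℕ := sInf {m | CanRepr l n m}

def IsSumOfTwoPowersOfTwo (n : ℕ) : Prop := ∃ k j, n = 2 ^ k + 2 ^ j

theorem two_mul_pow_le_of_pow_lt {i r : ℕ} (h : 2 ^ i < 2 ^ r) : 2 * 2 ^ i ≤ 2 ^ r := by
  rw [← pow_succ']
  exact Nat.pow_le_pow_right two_pos ((Nat.pow_lt_pow_iff_right one_lt_two).1 h)

namespace IsSumOfTwoPowersOfTwo

variable {a b x r : ℕ}

theorem pow_mul (hb : IsSumOfTwoPowersOfTwo b) (ha : a.isPowerOfTwo) :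
    IsSumOfTwoPowersOfTwo (a * b) := by
  obtain ⟨i, rfl⟩ := ha
  obtain ⟨k, l, rfl⟩ := hb
  exact ⟨i + k, i + l, by rw [mul_add, pow_add, pow_add]⟩

theorem mul_pow (ha : IsSumOfTwoPowersOfTwo a) (hb : b.isPowerOfTwo) :
    IsSumOfTwoPowersOfTwo (a * b) :=
  mul_comm b a ▸ ha.pow_mul hb

theorem three_mul_pow_mul_three_mul_pow (j l : ℕ) :
    IsSumOfTwoPowersOfTwo (3 * 2 ^ j * (3 * 2 ^ l)) :=
  ⟨j + l + 3, j + l, by ring⟩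

theorem le_pow_cases (hx : IsSumOfTwoPowersOfTwo x) (hle : x ≤ 2 ^ r) :
    x.isPowerOfTwo ∨
      4 * x ≤ 3 * 2 ^ r ∧ ((∃ j, x = 3 * 2 ^ j) ∨ 8 * x ≤ 5 * 2 ^ r) := by
  obtain ⟨i, j, rfl⟩ := hx
  wlog hji : j ≤ i generalizing i j
  · rw [add_comm] at hle ⊢
    exact this j i hle (by omega)
  obtain ⟨d, rfl⟩ := Nat.exists_eq_add_of_le hji
  have hj : 0 < 2 ^ j := Nat.two_pow_pos j
  rcases d with _ | _ | d
  · exact Or.inl ⟨j + 1, by ring⟩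
  · rw [zero_add] at hle ⊢
    have hr : 2 * 2 ^ (j + 1) ≤ 2 ^ r := two_mul_pow_le_of_pow_lt (by omega)
    rw [pow_succ] at hle hr ⊢
    exact Or.inr ⟨by omega, Or.inl ⟨j, by ring⟩⟩
  · have hr : 2 * 2 ^ (j + (d + 1 + 1)) ≤ 2 ^ r := two_mul_pow_le_of_pow_lt (by omega)
    have hgap : 4 * 2 ^ j ≤ 2 ^ (j + (d + 1 + 1)) := by
      rw [show 4 * 2 ^ j = 2 ^ (j + 2) by ring]
      exact Nat.pow_le_pow_right two_pos (by omega)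
    exact Or.inr ⟨by omega, Or.inr (by omega)⟩

theorem two_mul_mul_le {p q : ℕ} (ha : IsSumOfTwoPowersOfTwo a) (hb : IsSumOfTwoPowersOfTwo b)
    (hab : ¬IsSumOfTwoPowersOfTwo (a * b)) (haP : a ≤ 2 ^ p) (hbQ : b ≤ 2 ^ q) :
    2 * (a * b) ≤ 2 ^ p * 2 ^ q := by
  -- `3/4 * 5/8 < 1/2`
  have spare {x y P Q : ℕ} (hx : 4 * x ≤ 3 * P) (hy : 8 * y ≤ 5 * Q) :
      2 * (x * y) ≤ P * Q := by
    nlinarith [Nat.mul_le_mul hx hy]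
  rcases ha.le_pow_cases haP with hpa | ⟨ha4, ha3 | ha8⟩
  · exact (hab (hb.pow_mul hpa)).elim
  · rcases hb.le_pow_cases hbQ with hpb | ⟨-, hb3 | hb8⟩
    · exact (hab (ha.mul_pow hpb)).elim
    · obtain ⟨j, rfl⟩ := ha3
      obtain ⟨l, rfl⟩ := hb3
      exact (hab (three_mul_pow_mul_three_mul_pow j l)).elim
    · exact spare ha4 hb8
  · rcases hb.le_pow_cases hbQ with hpb | ⟨hb4, -⟩
    · exact (hab (ha.mul_pow hpb)).elim
    · rw [mul_comm a, mul_comm (2 ^ p)]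
      exact spare hb4 ha8

end IsSumOfTwoPowersOfTwo

theorem four_mul_le_of_not_isPowerOfTwo {x r : ℕ} (hle : x ≤ 2 ^ r)
    (hgap : ¬IsSumOfTwoPowersOfTwo x → 2 * x ≤ 2 ^ r) (hx : ¬x.isPowerOfTwo) :
    4 * x ≤ 3 * 2 ^ r := by
  by_cases hs : IsSumOfTwoPowersOfTwo x
  · rcases hs.le_pow_cases hle with hp | ⟨h4, -⟩
    exacts [absurd hp hx, h4]
  · have := hgap hs
    omega

theorem canRepr_mul (l : ℕ) {k : ℕ} (hk : 0 < k) : CanRepr l (l * k) k := by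
  induction k with
  | zero => omega
  | succ k ih =>
    rcases Nat.eq_zero_or_pos k with rfl | hk
    · simpa using CanRepr.base
    · rw [Nat.mul_succ]
      exact (ih hk).add .base

namespace CanRepr

variable {l n m : ℕ}

theorem canRepr_complexity (h : CanRepr l n m) : CanRepr l n (complexity l n) :=
  Nat.sInf_mem ⟨m, h⟩

theorem dvd (h : CanRepr l n m) : l ∣ n := by
  induction h with
  | base => exact dvd_rfl
  | add _ _ iha ihb => exact dvd_add iha ihb
  | mul _ _ iha _ => exact iha.mul_right _

theorem le (h : CanRepr l n m) : l ≤ n := by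
  induction h with
  | base => exact le_rfl
  | add _ _ iha _ => omega
  | mul _ _ iha ihb =>
    rcases Nat.eq_zero_or_pos l with rfl | hl
    · exact Nat.zero_le _
    · exact iha.trans (Nat.le_mul_of_pos_right _ (hl.trans_le ihb))

theorem le_pow (hl : 2 ≤ l) (h : CanRepr l n m) : n ≤ l ^ m := by
  induction h with
  | base => simp
  | @add a b p q ha hb iha ihb =>
    have hP : 2 ≤ l ^ p := hl.trans (ha.le.trans iha)
    have hQ : 2 ≤ l ^ q := hl.trans (hb.le.trans ihb)
    rw [pow_add]
    nlinarith
  | mul _ _ iha ihb =>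
    rw [pow_add]
    exact Nat.mul_le_mul iha ihb

theorem two_mul_add_le_of_not_isPowerOfTwo {a b p q : ℕ} (ha : CanRepr 2 a p)
    (hgap : ¬IsSumOfTwoPowersOfTwo a → 2 * a ≤ 2 ^ p) (hpa : ¬a.isPowerOfTwo)
    (hb : CanRepr 2 b q) : 2 * (a + b) ≤ 2 ^ p * 2 ^ q := by
  have h4 := four_mul_le_of_not_isPowerOfTwo (ha.le_pow le_rfl) hgap hpa
  have h6 : 6 ≤ a := by
    have := ha.dvd
    have := ha.le
    have : a ≠ 2 := fun h => hpa ⟨1, h⟩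
    have : a ≠ 4 := fun h => hpa ⟨2, h⟩
    omega
  have hbQ := hb.le_pow le_rfl
  have hQ : 2 ≤ 2 ^ q := hb.le.trans hbQ
  nlinarith

theorem two_mul_le_two_pow (h : CanRepr 2 n m) (hs : ¬IsSumOfTwoPowersOfTwo n) :
    2 * n ≤ 2 ^ m := by
  induction h with
  | base => exact (hs ⟨0, 0, rfl⟩).elim
  | @add a b p q ha hb iha ihb =>
    rw [pow_add]
    by_cases hpa : a.isPowerOfTwo
    · by_cases hpb : b.isPowerOfTwo
      · obtain ⟨i, rfl⟩ := hpa
        obtain ⟨k, rfl⟩ := hpb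
        exact (hs ⟨i, k, rfl⟩).elim
      · rw [add_comm a, mul_comm (2 ^ p)]
        exact hb.two_mul_add_le_of_not_isPowerOfTwo ihb hpb ha
    · exact ha.two_mul_add_le_of_not_isPowerOfTwo iha hpa hb
  | @mul a b p q ha hb iha ihb =>
    rw [pow_add]
    have haP := ha.le_pow le_rfl
    have hbQ := hb.le_pow le_rfl
    by_cases hsa : IsSumOfTwoPowersOfTwo a
    · by_cases hsb : IsSumOfTwoPowersOfTwo b
      · exact hsa.two_mul_mul_le hsb hs haP hbQ
      · calc 2 * (a * b) = a * (2 * b) := by ring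
          _ ≤ 2 ^ p * 2 ^ q := Nat.mul_le_mul haP (ihb hsb)
    · calc 2 * (a * b) = 2 * a * b := by ring
        _ ≤ 2 ^ p * 2 ^ q := Nat.mul_le_mul (iha hsa) hbQ

end CanRepr

theorem logb_add_one_le_of_mul_le_pow {b x : ℝ} {c : ℕ} (hb : 1 < b) (hx : 0 < x)
    (h : b * x ≤ b ^ c) : Real.logb b x + 1 ≤ c := by
  have hlog : Real.logb b (b * x) ≤ c := by
    rwa [Real.logb_le_iff_le_rpow hb (by positivity), Real.rpow_natCast]
  rwa [Real.logb_mul (by positivity) hx.ne', Real.logb_self_eq_one hb, add_comm] at hlog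

theorem stmt_7_general (n : ℕ) (hn : 0 < n) (heven : 2 ∣ n)
    (h2 : ¬ ∃ k j : ℕ, n = 2 ^ k + 2 ^ j) :
    Real.logb 2 n + 1 ≤ (complexity 2 n : ℝ) := by
  obtain ⟨k, rfl⟩ := heven
  have hrepr : CanRepr 2 (2 * k) (complexity 2 (2 * k)) :=
    (canRepr_mul 2 (by omega)).canRepr_complexity
  have hpos : (0 : ℝ) < (2 * k : ℕ) := by exact_mod_cast hn
  exact logb_add_one_le_of_mul_le_pow one_lt_two hpos
    (by exact_mod_cast hrepr.two_mul_le_two_pow h2)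

theorem stmt_7 (n : ℕ) (hn : 0 < n) (heven : 2 ∣ n)
    (h1 : ¬ ∃ k : ℕ, n = 2 ^ k)
    (h2 : ¬ ∃ k j : ℕ, n = 2 ^ k + 2 ^ j) :
    Real.logb 2 n + 1 ≤ (complexity 2 n : ℝ) :=
  stmt_7_general n hn heven h2
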